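/- arXiv:0810.1313 — 5 statements merged into one kernel-verified Lean document; each statement's English description precedes it below -/
import Mathlib

section
/- For every integer n ≥ 3 there exists a polynomial P with integer coefficients such that for every finite field F of cardinality q, the number of symmetric (n−1)×(n−1) matrices M over F with det M = 0 equals P(q). (This is the point-counting form of Proposition 4.1: the class of the dual graph hypersurface of the complete graph K_n lies in ℤ[𝔸¹].) -/
/-!
A symmetric `m × m` matrix of rank `r` over a field factors as `B * S * Bᵀ` with `B` an injective
`m × r` matrix and `S` a nonsingular symmetric `r × r` matrix (`B` spans the column space), and
any two such factorizations differ by `(B, S) ↦ (B * A, A⁻¹ * S * A⁻ᵀ)` for a unique `A ∈ GL_r`.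
Over `𝔽_q` this gives `#{rank r} * |GL_r(𝔽_q)| = #{injective B} * ν_r`, where `ν_r` counts the
nonsingular symmetric `r × r` matrices; both `#{injective B}` and `|GL_r(𝔽_q)|` are products
`∏_{i<r} (q^a - q^i)`, whose quotient is the Gaussian binomial `[m choose r]_q`. Sorting all
`q^(m(m+1)/2)` symmetric matrices by rank gives
`ν_m = q^(m(m+1)/2) - ∑_{r<m} [m choose r]_q ν_r`, a polynomial in `q` by induction, and the
singular ones number `q^(m(m+1)/2) - ν_m`.
-/

open scoped Classical

open Polynomial Function

namespace Polynomial

noncomputable def linIndepCount (a k : ℕ) : ℤ[X] :=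
  ∏ i ∈ Finset.range k, (X ^ a - X ^ i)

-- `m - r` truncates only when `r > m`, and then `gaussBinom m r = 0`.
noncomputable def gaussBinom : ℕ → ℕ → ℤ[X]
  | _, 0 => 1
  | 0, _ + 1 => 0
  | m + 1, r + 1 => gaussBinom m (r + 1) + X ^ (m - r) * gaussBinom m r

theorem linIndepCount_zero_right (a : ℕ) : linIndepCount a 0 = 1 :=
  Finset.prod_range_zero _

theorem linIndepCount_succ (a k : ℕ) :
    linIndepCount a (k + 1) = linIndepCount a k * (X ^ a - X ^ k) :=
  Finset.prod_range_succ _ _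

theorem linIndepCount_eq_zero {a k : ℕ} (h : a < k) : linIndepCount a k = 0 :=
  Finset.prod_eq_zero (Finset.mem_range.mpr h) (sub_self _)

theorem linIndepCount_succ_succ (a k : ℕ) :
    linIndepCount (a + 1) (k + 1) = (X ^ (a + 1) - 1) * (X ^ k * linIndepCount a k) := by
  have hfactor : ∀ i ∈ Finset.range k,
      (X ^ (a + 1) - X ^ (i + 1) : ℤ[X]) = X * (X ^ a - X ^ i) := fun i _ => by ring
  rw [linIndepCount, Finset.prod_range_succ', Finset.prod_congr rfl hfactor,
    Finset.prod_mul_distrib, Finset.prod_const, Finset.card_range, linIndepCount]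
  ring

theorem gaussBinom_zero_right (m : ℕ) : gaussBinom m 0 = 1 := by
  cases m <;> rfl

theorem gaussBinom_eq_zero : ∀ {m r : ℕ}, m < r → gaussBinom m r = 0
  | 0, _ + 1, _ => rfl
  | m + 1, r + 1, h => by
    rw [gaussBinom, gaussBinom_eq_zero (by omega), gaussBinom_eq_zero (by omega), mul_zero,
      add_zero]

theorem gaussBinom_mul_linIndepCount_self :
    ∀ m r : ℕ, gaussBinom m r * linIndepCount r r = linIndepCount m r
  | m, 0 => by rw [gaussBinom_zero_right, linIndepCount_zero_right, linIndepCount_zero_right,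
      one_mul]
  | 0, r + 1 => by rw [linIndepCount_eq_zero r.succ_pos, gaussBinom_eq_zero r.succ_pos, zero_mul]
  | m + 1, r + 1 => by
    rcases lt_or_ge m r with hmr | hrm
    · rw [gaussBinom_eq_zero (by omega), linIndepCount_eq_zero (a := m + 1) (by omega), zero_mul]
    have ih₁ := gaussBinom_mul_linIndepCount_self m (r + 1)
    have ih₀ := gaussBinom_mul_linIndepCount_self m r
    have hX : (X : ℤ[X]) ^ (m - r) * X ^ r = X ^ m := by rw [← pow_add, Nat.sub_add_cancel hrm]
    rw [linIndepCount_succ_succ, linIndepCount_succ] at ih₁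
    rw [gaussBinom, linIndepCount_succ_succ, linIndepCount_succ_succ]
    linear_combination ih₁ + (X : ℤ[X]) ^ (m - r) * (X ^ (r + 1) - 1) * X ^ r * ih₀ +
      (X ^ (r + 1) - 1) * linIndepCount m r * hX

theorem eval_linIndepCount {q : ℕ} (hq : 0 < q) {a k : ℕ} (h : k ≤ a) :
    (linIndepCount a k).eval (q : ℤ) = ((∏ i : Fin k, (q ^ a - q ^ (i : ℕ)) : ℕ) : ℤ) := by
  rw [linIndepCount, eval_prod, Fin.prod_univ_eq_prod_range (fun i => q ^ a - q ^ i), Nat.cast_prod]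
  refine Finset.prod_congr rfl fun i hi => ?_
  rw [Nat.cast_sub (Nat.pow_le_pow_right hq (Finset.mem_range.mp hi |>.le.trans h))]
  simp

end Polynomial

namespace Matrix

theorem IsSymm.mul_mul_transpose {α n k : Type*} [CommSemiring α] [Fintype k]
    {S : Matrix k k α} (hS : S.IsSymm) (B : Matrix n k α) : (B * S * Bᵀ).IsSymm := by
  rw [IsSymm, transpose_mul, transpose_mul, transpose_transpose, hS.eq, Matrix.mul_assoc]

theorem mul_mul_mul_transpose_of_mul_eq_one {α n k : Type*} [CommSemiring α] [Fintype n]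
    [Fintype k] [DecidableEq k] {B : Matrix n k α} {L : Matrix k n α} (hLB : L * B = 1)
    (X : Matrix k k α) :
    L * (B * X * Bᵀ) * Lᵀ = X := by
  calc L * (B * X * Bᵀ) * Lᵀ = L * B * X * (L * B)ᵀ := by
        simp only [transpose_mul, Matrix.mul_assoc]
    _ = X := by rw [hLB, transpose_one, Matrix.one_mul, Matrix.mul_one]

section Field

variable {F : Type*} [Field F] {n k : Type*}

theorem exists_mul_eq_one_of_injective_mulVec [Fintype n] [Fintype k] [DecidableEq k]
    {B : Matrix n k F} (hB : Injective B.mulVec) :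
    ∃ L : Matrix k n F, L * B = 1 := by
  obtain ⟨g, hg⟩ := B.mulVecLin.exists_leftInverse_of_injective (LinearMap.ker_eq_bot.mpr hB)
  refine ⟨LinearMap.toMatrix' g, ?_⟩
  have := congrArg LinearMap.toMatrix' hg
  rwa [LinearMap.toMatrix'_comp, LinearMap.toMatrix'_id, ← Matrix.toLin'_apply',
    LinearMap.toMatrix'_toLin'] at this

theorem rank_eq_card_iff_isUnit [Fintype k] [DecidableEq k] {A : Matrix k k F} :
    A.rank = Fintype.card k ↔ IsUnit A := by
  refine ⟨fun h => ?_, A.rank_of_isUnit⟩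
  rw [← mulVec_surjective_iff_isUnit, ← coe_mulVecLin, ← LinearMap.range_eq_top]
  exact Submodule.eq_top_of_finrank_eq (by rwa [Module.finrank_fintype_fun_eq_card])

theorem exists_injective_mulVec_mul_eq {m : Type*} [Fintype m] (M : Matrix n m F) {r : ℕ}
    (hr : M.rank = r) :
    ∃ (B : Matrix n (Fin r) F) (C : Matrix (Fin r) m F), Injective B.mulVec ∧ B * C = M := by
  let W := LinearMap.range M.mulVecLin
  let b : Module.Basis (Fin r) F W := Module.finBasisOfFinrankEq F W hr
  refine ⟨LinearMap.toMatrix' (W.subtype ∘ₗ b.equivFun.symm.toLinearMap),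
    LinearMap.toMatrix' (b.equivFun.toLinearMap ∘ₗ M.mulVecLin.rangeRestrict), ?_, ?_⟩
  · rw [← coe_mulVecLin, ← Matrix.toLin'_apply', Matrix.toLin'_toMatrix']
    exact W.injective_subtype.comp b.equivFun.symm.injective
  · apply Matrix.toLin'.injective
    rw [Matrix.toLin'_mul, Matrix.toLin'_toMatrix', Matrix.toLin'_toMatrix']
    refine LinearMap.ext fun v => ?_
    simp [W]

variable [Fintype n] [Fintype k] [DecidableEq k]

theorem rank_mul_mul_transpose_of_mul_eq_one {B : Matrix n k F} {L : Matrix k n F}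
    (hLB : L * B = 1) {S : Matrix k k F} (hS : IsUnit S) :
    (B * S * Bᵀ).rank = Fintype.card k := by
  refine le_antisymm ((rank_mul_le_left _ _).trans <| (rank_mul_le_left _ _).trans <|
    rank_le_card_width B) ?_
  calc Fintype.card k = S.rank := (S.rank_of_isUnit hS).symm
    _ = (L * (B * S * Bᵀ) * Lᵀ).rank := by rw [mul_mul_mul_transpose_of_mul_eq_one hLB]
    _ ≤ (B * S * Bᵀ).rank :=
      (rank_mul_le_left _ _).trans (rank_mul_le_right _ _)

theorem IsSymm.exists_mul_mul_transpose_eq {M : Matrix n n F} (hM : M.IsSymm) {r : ℕ}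
    (hr : M.rank = r) :
    ∃ (B : Matrix n (Fin r) F) (S : Matrix (Fin r) (Fin r) F),
      Injective B.mulVec ∧ S.IsSymm ∧ IsUnit S ∧ B * S * Bᵀ = M := by
  obtain ⟨B, C, hB, rfl⟩ := exists_injective_mulVec_mul_eq M hr
  obtain ⟨L, hLB⟩ := exists_mul_eq_one_of_injective_mulVec hB
  have hBLM : B * L * (B * C) = B * C := by
    rw [Matrix.mul_assoc, ← Matrix.mul_assoc L, hLB, Matrix.one_mul]
  have hM_eq : B * (L * (B * C) * Lᵀ) * Bᵀ = B * C := by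
    calc B * (L * (B * C) * Lᵀ) * Bᵀ = B * L * (B * C) * (B * L)ᵀ := by
          simp only [transpose_mul, Matrix.mul_assoc]
      _ = (B * L * (B * C)ᵀ)ᵀ := by
          rw [hBLM]; simp only [transpose_mul, transpose_transpose, Matrix.mul_assoc]
      _ = B * C := by rw [hM.eq, hBLM, hM.eq]
  refine ⟨B, L * (B * C) * Lᵀ, hB, hM.mul_mul_transpose L,
    (rank_eq_card_iff_isUnit (A := L * (B * C) * Lᵀ)).mp ?_, hM_eq⟩
  refine le_antisymm (rank_le_card_width _) ?_
  calc Fintype.card (Fin r) = (B * (L * (B * C) * Lᵀ) * Bᵀ).rank := by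
        rw [hM_eq, hr, Fintype.card_fin]
    _ ≤ (L * (B * C) * Lᵀ).rank := by
      rw [Matrix.mul_assoc]; exact (rank_mul_le_right _ _).trans (rank_mul_le_left _ _)

theorem exists_eq_mul_of_mul_mul_transpose_eq {B₀ B : Matrix n k F} {L₀ : Matrix k n F}
    (hLB₀ : L₀ * B₀ = 1) (hB : Injective B.mulVec) {S₀ S : Matrix k k F} (hS : IsUnit S)
    (h : B * S * Bᵀ = B₀ * S₀ * B₀ᵀ) :
    ∃ A : GL k F, B = B₀ * (A : Matrix k k F) ∧ S = (↑A⁻¹ : Matrix k k F) * S₀ * (↑A⁻¹)ᵀ := by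
  obtain ⟨L, hLB⟩ := exists_mul_eq_one_of_injective_mulVec hB
  obtain ⟨S', rfl⟩ := hS
  -- `B = B * S * Bᵀ * Lᵀ * S⁻¹`: the columns of `B` lie in the column space of `B₀`.
  have hB_eq : B = B₀ * (S₀ * B₀ᵀ * Lᵀ * (↑S'⁻¹ : Matrix k k F)) := by
    calc B = B * (S' : Matrix k k F) * (L * B)ᵀ * (↑S'⁻¹ : Matrix k k F) := by
          rw [hLB, transpose_one, Matrix.mul_one, Matrix.mul_assoc, Units.mul_inv, Matrix.mul_one]
      _ = B₀ * (S₀ * B₀ᵀ * Lᵀ * (↑S'⁻¹ : Matrix k k F)) := by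
          rw [transpose_mul, ← Matrix.mul_assoc, ← Matrix.mul_assoc, h]
          simp only [Matrix.mul_assoc]
  obtain ⟨A, hA⟩ : IsUnit (S₀ * B₀ᵀ * Lᵀ * (↑S'⁻¹ : Matrix k k F)) := by
    rw [← mulVec_injective_iff_isUnit]
    refine Injective.of_comp (f := B₀.mulVec) ?_
    simpa only [comp_def, mulVec_mulVec, ← hB_eq] using hB
  rw [← hA] at hB_eq
  refine ⟨A, hB_eq, ?_⟩
  have hS₀ : (A : Matrix k k F) * S' * (A : Matrix k k F)ᵀ = S₀ := by
    rw [← mul_mul_mul_transpose_of_mul_eq_one hLB₀ ((A : Matrix k k F) * S' * (A : Matrix k k F)ᵀ),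
      ← mul_mul_mul_transpose_of_mul_eq_one hLB₀ S₀, ← h, hB_eq]
    simp only [transpose_mul, Matrix.mul_assoc]
  rw [← hS₀, mul_mul_mul_transpose_of_mul_eq_one A.inv_mul]

theorem nonempty_factorizations_equiv_GL {B₀ : Matrix n k F} (hB₀ : Injective B₀.mulVec)
    {S₀ : Matrix k k F} (hS₀ : S₀.IsSymm) (hS₀u : IsUnit S₀) :
    Nonempty ({p : {B : Matrix n k F // Injective B.mulVec} ×
      {S : Matrix k k F // S.IsSymm ∧ IsUnit S} // p.1.1 * p.2.1 * p.1.1ᵀ = B₀ * S₀ * B₀ᵀ} ≃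
        GL k F) := by
  obtain ⟨L₀, hLB₀⟩ := exists_mul_eq_one_of_injective_mulVec hB₀
  have hinj (A : GL k F) : Injective (B₀ * (A : Matrix k k F)).mulVec := by
    simpa only [comp_def, mulVec_mulVec] using
      hB₀.comp (mulVec_injective_iff_isUnit.mpr A.isUnit)
  have hunit (A : GL k F) : IsUnit ((↑A⁻¹ : Matrix k k F) * S₀ * (↑A⁻¹)ᵀ) :=
    ((A⁻¹).isUnit.mul hS₀u).mul (isUnit_transpose _ |>.mpr (A⁻¹).isUnit)
  have hfactor (A : GL k F) : B₀ * (A : Matrix k k F) * ((↑A⁻¹ : Matrix k k F) * S₀ * (↑A⁻¹)ᵀ) *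
      (B₀ * (A : Matrix k k F))ᵀ = B₀ * S₀ * B₀ᵀ := by
    calc _ = B₀ * ((A : Matrix k k F) * ((↑A⁻¹ : Matrix k k F) * S₀ * (↑A⁻¹)ᵀ) *
          (A : Matrix k k F)ᵀ) * B₀ᵀ := by simp only [transpose_mul, Matrix.mul_assoc]
      _ = B₀ * S₀ * B₀ᵀ := by rw [mul_mul_mul_transpose_of_mul_eq_one A.mul_inv]
  let φ (A : GL k F) : {p : {B : Matrix n k F // Injective B.mulVec} ×
      {S : Matrix k k F // S.IsSymm ∧ IsUnit S} // p.1.1 * p.2.1 * p.1.1ᵀ = B₀ * S₀ * B₀ᵀ} :=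
    ⟨(⟨_, hinj A⟩, ⟨_, hS₀.mul_mul_transpose _, hunit A⟩), hfactor A⟩
  refine ⟨(Equiv.ofBijective φ ⟨fun A A' h => ?_, ?_⟩).symm⟩
  · have h' : B₀ * (A : Matrix k k F) = B₀ * (A' : Matrix k k F) :=
      congrArg (fun p => p.1.1.1) h
    apply Units.ext
    rw [← Matrix.one_mul (A : Matrix k k F), ← hLB₀, Matrix.mul_assoc, h', ← Matrix.mul_assoc,
      hLB₀, Matrix.one_mul]
  · rintro ⟨⟨⟨B, hB⟩, ⟨S, -, hSu⟩⟩, h⟩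
    obtain ⟨A, rfl, rfl⟩ := exists_eq_mul_of_mul_mul_transpose_eq hLB₀ hB hSu h
    exact ⟨A, rfl⟩

end Field

section Counting

variable {F : Type*}

theorem card_isSymm [Fintype F] (n : Type*) [Fintype n] [DecidableEq n] :
    Nat.card {M : Matrix n n F // M.IsSymm} = Fintype.card F ^ (Fintype.card n + 1).choose 2 := by
  let e : {M : Matrix n n F // M.IsSymm} ≃ (Sym2 n → F) :=
    { toFun M := Sym2.lift ⟨M.1, fun i j => (M.2.apply i j).symm⟩
      invFun f := ⟨of fun i j => f s(i, j), IsSymm.ext fun i j => by simp [Sym2.eq_swap]⟩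
      left_inv M := by ext; simp
      right_inv f := by ext s; induction s using Sym2.ind; simp }
  rw [Nat.card_congr e, Nat.card_eq_fintype_card, Fintype.card_fun, Sym2.card]

theorem card_injective_mulVec [Field F] [Fintype F] {m r : ℕ} (h : r ≤ m) :
    Nat.card {B : Matrix (Fin m) (Fin r) F // Injective B.mulVec} =
      ∏ i : Fin r, (Fintype.card F ^ m - Fintype.card F ^ (i : ℕ)) := by
  let e : Matrix (Fin m) (Fin r) F ≃ (Fin r → Fin m → F) :=
    ⟨col, fun s => (of s)ᵀ, fun _ => rfl, fun _ => rfl⟩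
  rw [Nat.card_congr (e.subtypeEquiv (p := fun B => Injective B.mulVec)
      (q := fun s => LinearIndependent F s) fun B => mulVec_injective_iff),
    card_linearIndependent (by simpa using h)]
  simp

theorem card_isSymm_eq_sum_card_rank [Field F] [Fintype F] (m : ℕ) :
    Nat.card {M : Matrix (Fin m) (Fin m) F // M.IsSymm} =
      ∑ r : Fin (m + 1), Nat.card {M : Matrix (Fin m) (Fin m) F // M.IsSymm ∧ M.rank = r} := by
  let rk (M : {M : Matrix (Fin m) (Fin m) F // M.IsSymm}) : Fin (m + 1) :=
    ⟨M.1.rank, Nat.lt_succ_of_le (rank_le_width _)⟩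
  rw [Nat.card_congr (Equiv.sigmaFiberEquiv rk).symm, Nat.card_sigma]
  exact Finset.sum_congr rfl fun r _ => Nat.card_congr <|
    (Equiv.subtypeEquivRight fun M => Fin.ext_iff).trans
      (Equiv.subtypeSubtypeEquivSubtypeInter _ fun M : Matrix (Fin m) (Fin m) F => M.rank = r)

theorem card_isSymm_rank_mul_card_GL [Field F] {n : Type*} [Fintype n] (r : ℕ) :
    Nat.card {M : Matrix n n F // M.IsSymm ∧ M.rank = r} * Nat.card (GL (Fin r) F) =
      Nat.card {B : Matrix n (Fin r) F // Injective B.mulVec} *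
        Nat.card {S : Matrix (Fin r) (Fin r) F // S.IsSymm ∧ IsUnit S} := by
  let Φ (p : {B : Matrix n (Fin r) F // Injective B.mulVec} ×
      {S : Matrix (Fin r) (Fin r) F // S.IsSymm ∧ IsUnit S}) :
      {M : Matrix n n F // M.IsSymm ∧ M.rank = r} :=
    ⟨p.1.1 * p.2.1 * p.1.1ᵀ, p.2.2.1.mul_mul_transpose _, by
      obtain ⟨L, hLB⟩ := exists_mul_eq_one_of_injective_mulVec p.1.2
      exact (rank_mul_mul_transpose_of_mul_eq_one hLB p.2.2.2).trans (Fintype.card_fin r)⟩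
  have hfiber (M : {M : Matrix n n F // M.IsSymm ∧ M.rank = r}) :
      Nonempty ({p // Φ p = M} ≃ GL (Fin r) F) := by
    obtain ⟨B₀, S₀, hB₀, hS₀, hS₀u, hM⟩ := M.2.1.exists_mul_mul_transpose_eq M.2.2
    obtain ⟨e⟩ := nonempty_factorizations_equiv_GL hB₀ hS₀ hS₀u
    exact ⟨(Equiv.subtypeEquivRight fun p => by rw [Subtype.ext_iff, hM]).trans e⟩
  rw [← Nat.card_prod, ← Nat.card_prod]
  exact Nat.card_congr <| (Equiv.sigmaEquivProd _ _).symm.trans <|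
    (Equiv.sigmaCongrRight fun M => (hfiber M).some.symm).trans (Equiv.sigmaFiberEquiv Φ)

theorem card_isSymm_rank_eq [Field F] [Fintype F] {m r : ℕ} (hr : r ≤ m) :
    (Nat.card {M : Matrix (Fin m) (Fin m) F // M.IsSymm ∧ M.rank = r} : ℤ) =
      (gaussBinom m r).eval (Fintype.card F : ℤ) *
        Nat.card {S : Matrix (Fin r) (Fin r) F // S.IsSymm ∧ IsUnit S} := by
  have hGL : (Nat.card (GL (Fin r) F) : ℤ) = (linIndepCount r r).eval (Fintype.card F : ℤ) := by
    rw [card_GL_field, eval_linIndepCount Fintype.card_pos le_rfl]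
  have hInj : (Nat.card {B : Matrix (Fin m) (Fin r) F // Injective B.mulVec} : ℤ) =
      (linIndepCount m r).eval (Fintype.card F : ℤ) := by
    rw [card_injective_mulVec hr, eval_linIndepCount Fintype.card_pos hr]
  have hGL_ne : (Nat.card (GL (Fin r) F) : ℤ) ≠ 0 := by exact_mod_cast Nat.card_pos.ne'
  have key := congrArg (Nat.cast : ℕ → ℤ) (card_isSymm_rank_mul_card_GL (F := F) (n := Fin m) r)
  push_cast at key
  rw [hInj, ← gaussBinom_mul_linIndepCount_self, eval_mul, ← hGL] at key
  exact mul_right_cancel₀ hGL_ne (by rw [key]; ring)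

theorem card_isSymm_det_eq_zero_add_card_isSymm_isUnit [Field F] [Fintype F] (n : Type*)
    [Fintype n] [DecidableEq n] :
    Nat.card {M : Matrix n n F // M.IsSymm ∧ M.det = 0} +
      Nat.card {M : Matrix n n F // M.IsSymm ∧ IsUnit M} =
        Nat.card {M : Matrix n n F // M.IsSymm} := by
  rw [← Nat.card_sum]
  refine Nat.card_congr <| Equiv.trans ?_ <|
    Equiv.sumCompl fun M : {M : Matrix n n F // M.IsSymm} => M.1.det = 0
  refine Equiv.sumCongr (Equiv.subtypeSubtypeEquivSubtypeInter _ _).symm <|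
    (Equiv.subtypeEquivRight fun M => and_congr_right fun _ => ?_).trans
      (Equiv.subtypeSubtypeEquivSubtypeInter _ fun M : Matrix n n F => ¬M.det = 0).symm
  rw [isUnit_iff_isUnit_det, isUnit_iff_ne_zero]

theorem exists_polynomial_card_isSymm_isUnit (m : ℕ) :
    ∃ P : ℤ[X], ∀ (F : Type*) [Field F] [Fintype F],
      (Nat.card {S : Matrix (Fin m) (Fin m) F // S.IsSymm ∧ IsUnit S} : ℤ) =
        P.eval (Fintype.card F : ℤ) := by
  induction m using Nat.strong_induction_on with
  | _ m ih =>
  choose P hP using ih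
  refine ⟨X ^ (m + 1).choose 2 - ∑ r : Fin m, gaussBinom m r * P r r.isLt, fun F _ _ => ?_⟩
  have hsum := card_isSymm_eq_sum_card_rank (F := F) m
  have htop : Nat.card {M : Matrix (Fin m) (Fin m) F // M.IsSymm ∧ M.rank = m} =
      Nat.card {S : Matrix (Fin m) (Fin m) F // S.IsSymm ∧ IsUnit S} :=
    Nat.card_congr <| Equiv.subtypeEquivRight fun M => and_congr_right fun _ => by
      rw [← rank_eq_card_iff_isUnit, Fintype.card_fin]
  have hlow (r : Fin m) :
      (Nat.card {M : Matrix (Fin m) (Fin m) F // M.IsSymm ∧ M.rank = r} : ℤ) =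
        (gaussBinom m r * P r r.isLt).eval (Fintype.card F : ℤ) := by
    rw [card_isSymm_rank_eq r.isLt.le, hP, eval_mul]
  rw [card_isSymm, Fintype.card_fin, Fin.sum_univ_castSucc] at hsum
  simp only [Fin.val_castSucc, Fin.val_last, htop] at hsum
  rw [eval_sub, eval_pow, eval_X, eval_finsetSum, ← Finset.sum_congr rfl fun r _ => hlow r,
    ← Nat.cast_pow, hsum]
  push_cast
  ring

end Counting

end Matrix

theorem card_singular_symmetric_matrices_is_polynomial_in_q_general (n : ℕ) :
    ∃ P : Polynomial ℤ,
      ∀ (F : Type) [Field F] [Fintype F],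
        (Fintype.card {M : Matrix (Fin (n - 1)) (Fin (n - 1)) F // M.IsSymm ∧ M.det = 0} : ℤ)
          = P.eval (Fintype.card F : ℤ) := by
  obtain ⟨P, hP⟩ := Matrix.exists_polynomial_card_isSymm_isUnit (n - 1)
  refine ⟨X ^ (n - 1 + 1).choose 2 - P, fun F _ _ => ?_⟩
  have hsplit := Matrix.card_isSymm_det_eq_zero_add_card_isSymm_isUnit (F := F) (Fin (n - 1))
  rw [Matrix.card_isSymm, Fintype.card_fin] at hsplit
  rw [← Nat.card_eq_fintype_card, eval_sub, eval_pow, eval_X, ← hP F, ← Nat.cast_pow, ← hsplit,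
    Nat.cast_add]
  ring

theorem card_singular_symmetric_matrices_is_polynomial_in_q (n : ℕ) (hn : 3 ≤ n) :
    ∃ P : Polynomial ℤ,
      ∀ (F : Type) [Field F] [Fintype F],
        (Fintype.card {M : Matrix (Fin (n - 1)) (Fin (n - 1)) F // M.IsSymm ∧ M.det = 0} : ℤ)
          = P.eval (Fintype.card F : ℤ) :=
  card_singular_symmetric_matrices_is_polynomial_in_q_general n
end

section
/- Let k be a field, E a finite set, and let P be an E×H matrix and Q an E×W matrix over k with |H| + |W| = |E|, such that P has rank |H|, Q has rank |W|, and Pᵀ·Q = 0 (the columns of Q are orthogonal to the columns of P for the standard bilinear form on k^E). Then there exists a nonzero constant c ∈ k such that for every family of units a : E → kˣ, det(Pᵀ · diag(a) · P) = c · (∏_{e ∈ E} a_e) · det(Qᵀ · diag(a⁻¹) · Q), where diag(a) is the E×E diagonal matrix with entries a_e and diag(a⁻¹) has entries a_e⁻¹. (Lemma 2.1: duality between Ψ and Ψ^∨.) -/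
/-!
Choose rows of `P` forming an invertible block `A` and identify `E` with `H ⊕ W` so that these
rows are indexed by `H`. Then `P = [1; X] A` with `X = B A⁻¹`, and `Pᵀ Q = 0` forces
`Q = [-Xᵀ; 1] Q₂`, where `Q₂` is invertible because `Q` has full rank. Write `diag a` as
`diag (D₁, D₂)` along `E = H ⊕ W`. Right multiplication by `A` and `Q₂` scales the two
determinants by the nonzero squares `det A ^ 2` and `det Q₂ ^ 2`, so it remains to compare
`det (D₁ + Xᵀ D₂ X)` with `det (X D₁⁻¹ Xᵀ + D₂⁻¹)`. Factoring out `D₁` and `D₂`, they differ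
by `det D₁ * det D₂ = ∏ a` by Sylvester's identity `det (1 + M N) = det (1 + N M)`.
-/

theorem Function.Injective.exists_equiv_sum {α β γ : Type*} [Fintype α] [Fintype β] [Fintype γ]
    {g : α → γ} (hg : Function.Injective g) (h : Fintype.card α + Fintype.card β = Fintype.card γ) :
    ∃ e : γ ≃ α ⊕ β, ∀ a, e.symm (Sum.inl a) = g a := by
  classical
  have hβ : Fintype.card {x // x ∉ Set.range g} = Fintype.card β := by
    rw [Fintype.card_subtype_compl, Set.card_range_of_injective hg]
    omega
  refine ⟨(Equiv.sumCompl (· ∈ Set.range g)).symm.trans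
    ((Equiv.ofInjective g hg).symm.sumCongr (Fintype.equivOfCardEq hβ)), fun a => ?_⟩
  simp

namespace Matrix

section CommRing

variable {R : Type*} [CommRing R] {l m n p : Type*}

theorem transpose_submatrix_mul_diagonal_mul_submatrix [Fintype l] [Fintype m] [DecidableEq l]
    [DecidableEq m] (M : Matrix m n R) (d : m → R) (e : l ≃ m) :
    (M.submatrix e id)ᵀ * diagonal (fun i => d (e i)) * M.submatrix e id = Mᵀ * diagonal d * M := by
  rw [transpose_submatrix, ← Function.comp_def, ← submatrix_diagonal_equiv, submatrix_mul_equiv,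
    submatrix_mul_equiv, submatrix_id_id]

theorem transpose_fromRows_mul_diagonal_mul_fromRows [Fintype m] [Fintype p] [DecidableEq m]
    [DecidableEq p] (A : Matrix m n R) (B : Matrix p n R) (d : m ⊕ p → R) :
    (fromRows A B)ᵀ * diagonal d * fromRows A B
      = Aᵀ * diagonal (fun i => d (Sum.inl i)) * A
        + Bᵀ * diagonal (fun j => d (Sum.inr j)) * B := by
  rw [transpose_fromRows, ← Sum.elim_comp_inl_inr d, ← fromBlocks_diagonal, fromCols_mul_fromBlocks,
    Matrix.mul_zero, Matrix.mul_zero, add_zero, zero_add, fromCols_mul_fromRows]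
  rfl

theorem det_transpose_mul_mul_mul_self [Fintype m] [Fintype n] [DecidableEq n] (M : Matrix m n R)
    (D : Matrix m m R) (G : Matrix n n R) :
    ((M * G)ᵀ * D * (M * G)).det = G.det ^ 2 * (Mᵀ * D * M).det := by
  rw [transpose_mul, show Gᵀ * Mᵀ * D * (M * G) = Gᵀ * (Mᵀ * D * M) * G by
    simp only [Matrix.mul_assoc], det_mul, det_mul, det_transpose]
  ring

theorem det_diagonal_add_transpose_mul_diagonal_mul [Fintype n] [Fintype p] [DecidableEq n]
    [DecidableEq p] (X : Matrix p n R) (d₁ : n → Rˣ) (d₂ : p → Rˣ) :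
    (diagonal (fun i => (d₁ i : R)) + Xᵀ * diagonal (fun j => (d₂ j : R)) * X).det
      = (∏ i, (d₁ i : R)) * (∏ j, (d₂ j : R)) *
        (X * diagonal (fun i => (((d₁ i)⁻¹ : Rˣ) : R)) * Xᵀ
          + diagonal (fun j => (((d₂ j)⁻¹ : Rˣ) : R))).det := by
  set D₁ := diagonal (fun i => (d₁ i : R))
  set D₂ := diagonal (fun j => (d₂ j : R))
  set D₁' := diagonal (fun i => (((d₁ i)⁻¹ : Rˣ) : R))
  set D₂' := diagonal (fun j => (((d₂ j)⁻¹ : Rˣ) : R))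
  have h₁ : D₁ * D₁' = 1 := by simp [D₁, D₁', diagonal_mul_diagonal]
  have h₂ : D₂ * D₂' = 1 := by simp [D₂, D₂', diagonal_mul_diagonal]
  calc (D₁ + Xᵀ * D₂ * X).det
      = (D₁ * (1 + (D₁' * Xᵀ) * (D₂ * X))).det := by
        rw [Matrix.mul_add, Matrix.mul_one]
        simp only [← Matrix.mul_assoc, h₁, Matrix.one_mul]
    _ = D₁.det * (1 + (D₂ * X) * (D₁' * Xᵀ)).det := by rw [det_mul, det_one_add_mul_comm]
    _ = D₁.det * (D₂ * (X * D₁' * Xᵀ + D₂')).det := by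
        rw [Matrix.mul_add, h₂, add_comm]
        simp only [Matrix.mul_assoc]
    _ = _ := by rw [det_mul, det_diagonal, det_diagonal, mul_assoc]

theorem det_fromRows_one_duality [Fintype n] [Fintype p] [DecidableEq n] [DecidableEq p]
    (X : Matrix p n R) (d : n ⊕ p → Rˣ) :
    ((fromRows (1 : Matrix n n R) X)ᵀ * diagonal (fun i => (d i : R))
        * fromRows (1 : Matrix n n R) X).det
      = (∏ i, (d i : R)) *
        ((fromRows (-Xᵀ) (1 : Matrix p p R))ᵀ * diagonal (fun i => (((d i)⁻¹ : Rˣ) : R))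
          * fromRows (-Xᵀ) (1 : Matrix p p R)).det := by
  simp only [transpose_fromRows_mul_diagonal_mul_fromRows, transpose_one, Matrix.one_mul,
    Matrix.mul_one, transpose_neg, transpose_transpose, Matrix.neg_mul, Matrix.mul_neg, neg_neg]
  rw [det_diagonal_add_transpose_mul_diagonal_mul, Fintype.prod_sum_type]

theorem fromRows_eq_fromRows_one_mul [Fintype n] [DecidableEq n] {A : Matrix n n R}
    (hA : IsUnit A.det) (B : Matrix p n R) :
    fromRows A B = fromRows 1 (B * A⁻¹) * A := by
  rw [fromRows_mul, Matrix.one_mul, nonsing_inv_mul_cancel_right _ _ hA]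

theorem fromRows_eq_fromRows_neg_transpose_mul [Fintype n] [Fintype p] [DecidableEq n]
    [DecidableEq p] {A : Matrix n n R} (hA : IsUnit A.det) {B : Matrix p n R}
    {Q₁ : Matrix n l R} {Q₂ : Matrix p l R} (h : (fromRows A B)ᵀ * fromRows Q₁ Q₂ = 0) :
    fromRows Q₁ Q₂ = fromRows (-(B * A⁻¹)ᵀ) 1 * Q₂ := by
  have hAt : IsUnit Aᵀ.det := by rwa [det_transpose]
  rw [fromRows_eq_fromRows_one_mul hA B, transpose_mul, Matrix.mul_assoc,
    transpose_fromRows, fromCols_mul_fromRows, transpose_one, Matrix.one_mul] at h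
  have hQ : Q₁ + (B * A⁻¹)ᵀ * Q₂ = 0 := by
    rw [← nonsing_inv_mul_cancel_left _ (Q₁ + (B * A⁻¹)ᵀ * Q₂) hAt, h, Matrix.mul_zero]
  rw [eq_neg_of_add_eq_zero_left hQ, fromRows_mul, Matrix.one_mul, Matrix.neg_mul]

end CommRing

section Field

variable {K : Type*} [Field K] {m n p : Type*} [Fintype n] [DecidableEq n]

theorem isUnit_of_rank_eq_card {A : Matrix n n K} (h : A.rank = Fintype.card n) : IsUnit A :=
  linearIndependent_rows_iff_isUnit.1 <| linearIndependent_iff_card_eq_finrank_span.2 <| by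
    rw [Set.finrank, ← rank_eq_finrank_span_row, h]

theorem exists_injective_isUnit_submatrix [Finite m] (P : Matrix m n K)
    (h : P.rank = Fintype.card n) :
    ∃ g : n → m, Function.Injective g ∧ IsUnit (P.submatrix g id) := by
  obtain ⟨κ, a, ha, hspan, hli⟩ := exists_linearIndependent' K P.row
  have : Finite κ := .of_injective a ha
  have : Fintype κ := .ofFinite κ
  have hκ : Fintype.card κ = Fintype.card n := by
    rw [linearIndependent_iff_card_eq_finrank_span.1 hli, Set.finrank, hspan,
      ← rank_eq_finrank_span_row, h]
  let ε : n ≃ κ := Fintype.equivOfCardEq hκ.symm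
  exact ⟨a ∘ ε, ha.comp ε.injective, linearIndependent_rows_iff_isUnit.1 (hli.comp ε ε.injective)⟩

theorem exists_det_duality_of_isUnit_toRows₁ [Fintype p] [DecidableEq p]
    {P : Matrix (n ⊕ p) n K} {Q : Matrix (n ⊕ p) p K} (hP : IsUnit P.toRows₁.det)
    (hQ : Q.rank = Fintype.card p) (hPQ : Pᵀ * Q = 0) :
    ∃ c : K, c ≠ 0 ∧ ∀ d : n ⊕ p → Kˣ,
      (Pᵀ * diagonal (fun i => (d i : K)) * P).det
        = c * (∏ i, (d i : K)) * (Qᵀ * diagonal (fun i => (((d i)⁻¹ : Kˣ) : K)) * Q).det := by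
  obtain ⟨A, B, rfl⟩ : ∃ A B, P = fromRows A B := ⟨_, _, (fromRows_toRows P).symm⟩
  obtain ⟨Q₁, Q₂, rfl⟩ : ∃ Q₁ Q₂, Q = fromRows Q₁ Q₂ := ⟨_, _, (fromRows_toRows Q).symm⟩
  rw [toRows₁_fromRows] at hP
  rw [fromRows_eq_fromRows_neg_transpose_mul hP hPQ] at hQ ⊢
  have hQ₂ : IsUnit Q₂.det := (isUnit_iff_isUnit_det _).1 <| isUnit_of_rank_eq_card <|
    le_antisymm (rank_le_card_width _) (hQ ▸ rank_mul_le_right _ _)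
  refine ⟨(A.det / Q₂.det) ^ 2, by simp [hP.ne_zero, hQ₂.ne_zero], fun d => ?_⟩
  rw [fromRows_eq_fromRows_one_mul hP B, det_transpose_mul_mul_mul_self,
    det_transpose_mul_mul_mul_self, det_fromRows_one_duality]
  field_simp [hQ₂.ne_zero]

end Field

end Matrix

open Matrix in
theorem psi_dual_psi_duality {k : Type} [Field k] {E H W : Type}
    [Fintype E] [DecidableEq E] [Fintype H] [DecidableEq H] [Fintype W] [DecidableEq W]
    (P : Matrix E H k) (Q : Matrix E W k)
    (hcard : Fintype.card H + Fintype.card W = Fintype.card E)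
    (hrankP : P.rank = Fintype.card H)
    (hrankQ : Q.rank = Fintype.card W)
    (hPQ : Pᵀ * Q = 0) :
    ∃ c : k, c ≠ 0 ∧
      ∀ a : E → kˣ,
        (Pᵀ * Matrix.diagonal (fun e => (a e : k)) * P).det =
          c * (∏ e : E, (a e : k)) *
            (Qᵀ * Matrix.diagonal (fun e => (((a e)⁻¹ : kˣ) : k)) * Q).det := by
  obtain ⟨g, hg, hPg⟩ := P.exists_injective_isUnit_submatrix hrankP
  obtain ⟨e, he⟩ := hg.exists_equiv_sum hcard
  have hP₁ : (P.submatrix e.symm id).toRows₁ = P.submatrix g id := by ext; simp [he]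
  obtain ⟨c, hc, hdual⟩ :=
    exists_det_duality_of_isUnit_toRows₁ (P := P.submatrix e.symm id) (Q := Q.submatrix e.symm id)
      (by rw [hP₁, ← isUnit_iff_isUnit_det]; exact hPg)
      (by simpa [hrankQ] using Q.rank_submatrix e.symm (Equiv.refl W))
      (by rw [transpose_submatrix, submatrix_mul_equiv, hPQ, submatrix_id_id])
  refine ⟨c, hc, fun a => ?_⟩
  rw [← transpose_submatrix_mul_diagonal_mul_submatrix P _ e.symm,
    ← transpose_submatrix_mul_diagonal_mul_submatrix Q _ e.symm, ← e.symm.prod_comp]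
  exact hdual _
end

section
/- Let k be a field and n ≥ 2. The family of matrices N_{ij}, indexed by the pairs 1 ≤ i < j ≤ n (the edges of the complete graph K_n), is a basis of the k-vector space of symmetric (n−1)×(n−1) matrices over k. (The lemma inside the proof of Proposition 4.1.) -/
/-!
STATEMENT 9 (the lemma inside the proof of Proposition 4.1):
The matrices `N_{ij}`, indexed by the edges `{i,j}` (`1 ≤ i < j ≤ n`) of the complete
graph `K_n`, form a basis of the `k`-vector space of symmetric `(n−1)×(n−1)` matrices.
-/

/-- The symmetric `(n−1)×(n−1)` matrix `N_{ij}` attached to the edge `{i,j}` of `K_n`: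
its `(x,y)` entry is `d(x)·d(y)` where `d(x) = [x = i] − [x = j]`.  For `j < n` this has
`1` at `(i,i)`, `(j,j)`, `−1` at `(i,j)`, `(j,i)` and `0` elsewhere; for `j = n` it has a
single `1` at `(i,i)`. -/
def Nmat (k : Type) [Ring k] (n : ℕ) (i j : Fin n) :
    Matrix (Fin (n - 1)) (Fin (n - 1)) k :=
  Matrix.of fun x y =>
    ((if (x : ℕ) = (i : ℕ) then 1 else 0) - (if (x : ℕ) = (j : ℕ) then 1 else 0)) *
    ((if (y : ℕ) = (i : ℕ) then 1 else 0) - (if (y : ℕ) = (j : ℕ) then 1 else 0))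

/-- The subspace of symmetric `m×m` matrices over `k`. -/
def symmetricMatrices (k : Type) [Field k] (m : Type) [Fintype m] :
    Submodule k (Matrix m m k) where
  carrier := {M | M.IsSymm}
  add_mem' := fun hA hB => hA.add hB
  zero_mem' := Matrix.isSymm_zero
  smul_mem' := fun c _ hA => hA.smul c

section Aux

variable {k : Type} [Field k] {n : ℕ}

private lemma sum_ind (m c : ℕ) :
    (∑ y : Fin m, (if (y : ℕ) = c then (1 : k) else 0)) = if c < m then 1 else 0 := by
  by_cases h : c < m
  · rw [if_pos h, Finset.sum_eq_single (⟨c, h⟩ : Fin m)]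
    · simp
    · intro b _ hb
      rw [if_neg]
      intro hc
      exact hb (Fin.ext hc)
    · simp
  · rw [if_neg h]
    apply Finset.sum_eq_zero
    intro y _
    rw [if_neg]
    have := y.isLt
    omega

/-- Off-diagonal entries of a linear combination of the `Nmat`s. -/
private lemma key_offdiag (g : {p : Fin n × Fin n // p.1 < p.2} → k)
    (x y : Fin (n - 1)) (hxy : (x : ℕ) < (y : ℕ))
    (e0 : {p : Fin n × Fin n // p.1 < p.2})
    (he1 : (e0.1.1 : ℕ) = (x : ℕ)) (he2 : (e0.1.2 : ℕ) = (y : ℕ)) :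
    (∑ e : {p : Fin n × Fin n // p.1 < p.2}, g e • Nmat k n e.1.1 e.1.2) x y
      = - g e0 := by
  rw [Matrix.sum_apply]
  rw [Finset.sum_eq_single e0]
  · have h1 : (x : ℕ) ≠ (y : ℕ) := hxy.ne
    simp [Nmat, he1, he2, hxy.ne, hxy.ne']
  · rintro ⟨⟨i, j⟩, hij⟩ - hne
    have hij' : (i : ℕ) < (j : ℕ) := hij
    simp only [Matrix.smul_apply, Nmat, Matrix.of_apply, smul_eq_mul]
    rcases eq_or_ne (x : ℕ) (i : ℕ) with h1 | h1
    · rcases eq_or_ne (y : ℕ) (j : ℕ) with h4 | h4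
      · exfalso
        apply hne
        have hii : i = e0.1.1 := Fin.ext (by omega)
        have hjj : j = e0.1.2 := Fin.ext (by omega)
        exact Subtype.ext (Prod.ext hii hjj)
      · have h3 : (y : ℕ) ≠ (i : ℕ) := by omega
        simp [h3, h4]
    · rcases eq_or_ne (x : ℕ) (j : ℕ) with h2 | h2
      · have h3 : (y : ℕ) ≠ (i : ℕ) := by omega
        have h4 : (y : ℕ) ≠ (j : ℕ) := by omega
        simp [h3, h4]
      · simp [h1, h2]
  · simp

/-- Row sums of a linear combination of the `Nmat`s. -/
private lemma key_rowsum (g : {p : Fin n × Fin n // p.1 < p.2} → k)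
    (x : Fin (n - 1))
    (e0 : {p : Fin n × Fin n // p.1 < p.2})
    (he1 : (e0.1.1 : ℕ) = (x : ℕ)) (he2 : (e0.1.2 : ℕ) = n - 1) :
    (∑ y, (∑ e : {p : Fin n × Fin n // p.1 < p.2}, g e • Nmat k n e.1.1 e.1.2) x y)
      = g e0 := by
  have step : ∀ e : {p : Fin n × Fin n // p.1 < p.2},
      (∑ y : Fin (n - 1), (g e • Nmat k n e.1.1 e.1.2) x y)
        = g e * (((if (x : ℕ) = (e.1.1 : ℕ) then 1 else 0)
              - (if (x : ℕ) = (e.1.2 : ℕ) then 1 else 0)) *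
            ((if ((e.1.1 : ℕ)) < n - 1 then (1 : k) else 0)
              - (if ((e.1.2 : ℕ)) < n - 1 then 1 else 0))) := by
    intro e
    simp only [Matrix.smul_apply, Nmat, Matrix.of_apply, smul_eq_mul]
    rw [← Finset.mul_sum]
    congr 1
    rw [← Finset.mul_sum]
    congr 1
    rw [Finset.sum_sub_distrib, sum_ind, sum_ind]
  calc (∑ y, (∑ e : {p : Fin n × Fin n // p.1 < p.2}, g e • Nmat k n e.1.1 e.1.2) x y)
      = ∑ y, ∑ e : {p : Fin n × Fin n // p.1 < p.2}, (g e • Nmat k n e.1.1 e.1.2) x y := by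
        simp [Matrix.sum_apply]
    _ = ∑ e : {p : Fin n × Fin n // p.1 < p.2}, ∑ y, (g e • Nmat k n e.1.1 e.1.2) x y :=
        Finset.sum_comm
    _ = ∑ e : {p : Fin n × Fin n // p.1 < p.2},
          g e * (((if (x : ℕ) = (e.1.1 : ℕ) then 1 else 0)
              - (if (x : ℕ) = (e.1.2 : ℕ) then 1 else 0)) *
            ((if ((e.1.1 : ℕ)) < n - 1 then (1 : k) else 0)
              - (if ((e.1.2 : ℕ)) < n - 1 then 1 else 0))) :=
        Finset.sum_congr rfl fun e _ => step e
    _ = g e0 := by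
        rw [Finset.sum_eq_single e0]
        · have h1 : (x : ℕ) < n - 1 := x.isLt
          have h2 : ¬ ((x : ℕ) = n - 1) := by omega
          simp [he1, he2, h1, h2]
        · rintro ⟨⟨i, j⟩, hij⟩ - hne
          have hij' : (i : ℕ) < (j : ℕ) := hij
          have hjn : (j : ℕ) < n := j.isLt
          by_cases hj : (j : ℕ) < n - 1
          · have hi : (i : ℕ) < n - 1 := by omega
            simp [hi, hj]
          · have hj' : (j : ℕ) = n - 1 := by omega
            have hxj : (x : ℕ) ≠ (j : ℕ) := by have := x.isLt; omega
            rcases eq_or_ne (x : ℕ) (i : ℕ) with hxi | hxi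
            · exfalso
              apply hne
              have hii : i = e0.1.1 := Fin.ext (by omega)
              have hjj : j = e0.1.2 := Fin.ext (by omega)
              exact Subtype.ext (Prod.ext hii hjj)
            · simp [hxi, hxj]
        · simp

/-- Each `Nmat` is symmetric, hence so is any linear combination. -/
private lemma Nmat_isSymm (i j : Fin n) : (Nmat k n i j).IsSymm := by
  ext x y
  simp only [Nmat, Matrix.transpose_apply, Matrix.of_apply]
  ring

private lemma sum_symm (g : {p : Fin n × Fin n // p.1 < p.2} → k) (x y : Fin (n - 1)) :
    (∑ e : {p : Fin n × Fin n // p.1 < p.2}, g e • Nmat k n e.1.1 e.1.2) x y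
      = (∑ e : {p : Fin n × Fin n // p.1 < p.2}, g e • Nmat k n e.1.1 e.1.2) y x := by
  rw [Matrix.sum_apply, Matrix.sum_apply]
  apply Finset.sum_congr rfl
  intro e _
  simp only [Matrix.smul_apply, Nmat, Matrix.of_apply, smul_eq_mul]
  ring

end Aux

/-- The coefficients recovering a symmetric matrix as a combination of the `Nmat`s. -/
private def coeffs (k : Type) [Field k] (n : ℕ)
    (M : Matrix (Fin (n - 1)) (Fin (n - 1)) k)
    (e : {p : Fin n × Fin n // p.1 < p.2}) : k :=
  if h : (e.1.2 : ℕ) = n - 1 then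
    ∑ y, M ⟨(e.1.1 : ℕ), by
      have h2 : (e.1.1 : ℕ) < (e.1.2 : ℕ) := e.2
      omega⟩ y
  else
    - M ⟨(e.1.1 : ℕ), by
        have h2 : (e.1.1 : ℕ) < (e.1.2 : ℕ) := e.2
        have h3 := e.1.2.isLt
        omega⟩
      ⟨(e.1.2 : ℕ), by
        have h3 := e.1.2.isLt
        omega⟩

theorem Nmat_isBasis_of_symmetric_matrices (k : Type) [Field k] (n : ℕ) (hn : 2 ≤ n) :
    LinearIndependent k
        (fun e : {p : Fin n × Fin n // p.1 < p.2} => Nmat k n e.1.1 e.1.2)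
      ∧ Submodule.span k
          (Set.range fun e : {p : Fin n × Fin n // p.1 < p.2} => Nmat k n e.1.1 e.1.2)
        = symmetricMatrices k (Fin (n - 1)) := by
  constructor
  · rw [Fintype.linearIndependent_iff]
    intro g hsum e
    obtain ⟨⟨i, j⟩, hij⟩ := e
    have hij' : (i : ℕ) < (j : ℕ) := hij
    have hjn : (j : ℕ) < n := j.isLt
    by_cases hj : (j : ℕ) = n - 1
    · have hi : (i : ℕ) < n - 1 := by omega
      have h := key_rowsum g (⟨(i : ℕ), hi⟩ : Fin (n - 1)) ⟨(i, j), hij⟩ rfl hj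
      rw [hsum] at h
      simpa using h.symm
    · have hj2 : (j : ℕ) < n - 1 := by omega
      have hi : (i : ℕ) < n - 1 := by omega
      have h := key_offdiag g (⟨(i : ℕ), hi⟩ : Fin (n - 1)) (⟨(j : ℕ), hj2⟩ : Fin (n - 1))
        hij' ⟨(i, j), hij⟩ rfl rfl
      rw [hsum] at h
      simpa using h.symm
  · apply le_antisymm
    · rw [Submodule.span_le]
      rintro M ⟨e, rfl⟩
      show (Nmat k n e.1.1 e.1.2).IsSymm
      exact Nmat_isSymm _ _
    · intro M hM
      have hMs : M.IsSymm := hM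
      have hrep : (∑ e : {p : Fin n × Fin n // p.1 < p.2},
          coeffs k n M e • Nmat k n e.1.1 e.1.2) = M := by
        ext x y
        have hx : (x : ℕ) < n - 1 := x.isLt
        have hy : (y : ℕ) < n - 1 := y.isLt
        rcases lt_trichotomy (x : ℕ) (y : ℕ) with hlt | heq | hgt
        · rw [key_offdiag (coeffs k n M) x y hlt
            ⟨(⟨(x : ℕ), by omega⟩, ⟨(y : ℕ), by omega⟩), by
              simp only [Fin.mk_lt_mk]; exact hlt⟩ rfl rfl]
          simp only [coeffs]
          rw [dif_neg (by omega)]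
          simp
        · -- diagonal case
          have hxy : x = y := Fin.ext heq
          subst hxy
          have hrow := key_rowsum (coeffs k n M) x
            ⟨(⟨(x : ℕ), by omega⟩, ⟨n - 1, by omega⟩), by
              simp only [Fin.mk_lt_mk]; exact hx⟩ rfl rfl
          have hcoef : coeffs k n M
              ⟨(⟨(x : ℕ), by omega⟩, ⟨n - 1, by omega⟩), by
                simp only [Fin.mk_lt_mk]; exact hx⟩ = ∑ y', M x y' := by
            simp only [coeffs]
            simp
          rw [hcoef] at hrow
          have hoff : ∀ y' ∈ Finset.univ.erase x,
              (∑ e : {p : Fin n × Fin n // p.1 < p.2},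
                coeffs k n M e • Nmat k n e.1.1 e.1.2) x y' = M x y' := by
            intro y' hy'
            have hne : y' ≠ x := Finset.ne_of_mem_erase hy'
            have hy'2 : (y' : ℕ) < n - 1 := y'.isLt
            rcases lt_or_gt_of_ne (fun h : (x : ℕ) = (y' : ℕ) => hne (Fin.ext h.symm))
              with hlt | hgt
            · rw [key_offdiag (coeffs k n M) x y' hlt
                ⟨(⟨(x : ℕ), by omega⟩, ⟨(y' : ℕ), by omega⟩), by
                  simp only [Fin.mk_lt_mk]; exact hlt⟩ rfl rfl]
              simp only [coeffs]
              rw [dif_neg (by omega)]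
              simp
            · rw [sum_symm]
              rw [key_offdiag (coeffs k n M) y' x hgt
                ⟨(⟨(y' : ℕ), by omega⟩, ⟨(x : ℕ), by omega⟩), by
                  simp only [Fin.mk_lt_mk]; exact hgt⟩ rfl rfl]
              simp only [coeffs]
              rw [dif_neg (by omega)]
              simp only [Fin.eta, neg_neg]
              exact (hMs.apply x y').symm ▸ rfl
          have e1 := Finset.add_sum_erase Finset.univ
            (fun y' => (∑ e : {p : Fin n × Fin n // p.1 < p.2},
              coeffs k n M e • Nmat k n e.1.1 e.1.2) x y') (Finset.mem_univ x)
          have e2 := Finset.add_sum_erase Finset.univ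
            (fun y' => M x y') (Finset.mem_univ x)
          have e3 := Finset.sum_congr rfl hoff
          linear_combination e1 - e2 - e3 + hrow
        · rw [sum_symm]
          rw [key_offdiag (coeffs k n M) y x hgt
            ⟨(⟨(y : ℕ), by omega⟩, ⟨(x : ℕ), by omega⟩), by
              simp only [Fin.mk_lt_mk]; exact hgt⟩ rfl rfl]
          simp only [coeffs]
          rw [dif_neg (by omega)]
          simp only [Fin.eta, neg_neg]
          exact (hMs.apply x y).symm ▸ rfl
      rw [← hrep]
      exact Submodule.sum_mem _ fun e _ =>
        Submodule.smul_mem _ _ (Submodule.subset_span ⟨e, rfl⟩)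
end

section
/- Let k be a field and let a ≤ b and 0 ≤ p ≤ a be integers with a − p ≤ b − a. There is a bijection between the set of a-dimensional linear subspaces V of k^{b−a} × k^a such that the image of V under the projection to k^a has dimension p, and the set of triples (W, Y, f) where W is an (a−p)-dimensional subspace of k^{b−a}, Y is a p-dimensional subspace of k^a, and f : Y → k^{b−a}/W is a linear map; the bijection sends V to (V ∩ (k^{b−a} × 0), proj_{k^a}(V), the induced map). (The stratification of the Grassmannian Gr(a,b) used to show [Gr(a,b)] ∈ ℤ[𝔸¹].) -/
/-!
STATEMENT 14 (the stratification of the Grassmannian `Gr(a,b)` used to show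
`[Gr(a,b)] ∈ ℤ[𝔸¹]`): the `a`-dimensional subspaces `V` of `k^{b−a} × k^a` whose
projection to `k^a` has dimension `p` correspond bijectively to triples `(W, Y, f)` with
`W ⊆ k^{b−a}` of dimension `a−p`, `Y ⊆ k^a` of dimension `p`, and `f : Y → k^{b−a}/W`
linear; the bijection sends `V` to `(V ∩ (k^{b−a} × 0), proj(V), induced map)`.
-/


namespace GrassStrat

variable {k : Type} [Field k] {m n : ℕ}

noncomputable def gsub (W : Submodule k (Fin m → k)) (Y : Submodule k (Fin n → k))
    (f : Y →ₗ[k] (Fin m → k) ⧸ W) : Submodule k ((Fin m → k) × (Fin n → k)) :=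
  Submodule.map ((LinearMap.id : (Fin m → k) →ₗ[k] _).prodMap Y.subtype)
    (LinearMap.ker (W.mkQ.comp (LinearMap.fst k (Fin m → k) Y)
      - f.comp (LinearMap.snd k (Fin m → k) Y)))

lemma mem_gsub {W : Submodule k (Fin m → k)} {Y : Submodule k (Fin n → k)}
    {f : Y →ₗ[k] (Fin m → k) ⧸ W} {x : Fin m → k} {y : Fin n → k} :
    (x, y) ∈ gsub W Y f ↔ ∃ hy : y ∈ Y, f ⟨y, hy⟩ = Submodule.Quotient.mk x := by
  constructor
  · rintro ⟨⟨x', y'⟩, h, heq⟩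
    simp only [SetLike.mem_coe, LinearMap.mem_ker, LinearMap.sub_apply, LinearMap.comp_apply,
      LinearMap.fst_apply, LinearMap.snd_apply, sub_eq_zero] at h
    obtain ⟨hx, hy⟩ : x' = x ∧ (y' : Fin n → k) = y := by
      simpa [Prod.ext_iff, LinearMap.prodMap_apply] using heq
    subst hx
    refine ⟨hy ▸ y'.2, ?_⟩
    have : (⟨y, hy ▸ y'.2⟩ : Y) = y' := Subtype.ext hy.symm
    rw [this, ← h, Submodule.mkQ_apply]
  · rintro ⟨hy, hf⟩
    exact ⟨(x, ⟨y, hy⟩), by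
      simp [LinearMap.mem_ker, sub_eq_zero, hf, Submodule.Quotient.mk''_eq_mk], rfl⟩

end GrassStrat

namespace GrassStrat
variable {k : Type} [Field k] {m n : ℕ}
variable {W : Submodule k (Fin m → k)} {Y : Submodule k (Fin n → k)}
  {f : Y →ₗ[k] (Fin m → k) ⧸ W}

lemma comap_inl_gsub : Submodule.comap (LinearMap.inl k (Fin m → k) (Fin n → k)) (gsub W Y f) = W := by
  ext x
  simp only [Submodule.mem_comap, LinearMap.inl_apply, mem_gsub]
  constructor
  · rintro ⟨hy, hf⟩
    have : f ⟨0, hy⟩ = 0 := by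
      have : (⟨0, hy⟩ : Y) = 0 := rfl
      rw [this, map_zero]
    rw [this] at hf
    rwa [eq_comm, Submodule.Quotient.mk_eq_zero] at hf
  · intro hx
    refine ⟨Y.zero_mem, ?_⟩
    have h0 : (⟨0, Y.zero_mem⟩ : Y) = 0 := rfl
    rw [h0, map_zero, eq_comm, Submodule.Quotient.mk_eq_zero]
    exact hx

lemma map_snd_gsub : Submodule.map (LinearMap.snd k (Fin m → k) (Fin n → k)) (gsub W Y f) = Y := by
  ext y
  simp only [Submodule.mem_map, LinearMap.snd_apply, Prod.exists, exists_eq_right]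
  constructor
  · rintro ⟨x, hx⟩
    exact (mem_gsub.1 hx).1
  · intro hy
    obtain ⟨x, hx⟩ := Submodule.mkQ_surjective W (f ⟨y, hy⟩)
    exact ⟨x, mem_gsub.2 ⟨hy, hx.symm⟩⟩

lemma finrank_gsub :
    Module.finrank k (gsub W Y f) = Module.finrank k W + Module.finrank k Y := by
  classical
  set φ := (W.mkQ.comp (LinearMap.fst k (Fin m → k) Y)
      - f.comp (LinearMap.snd k (Fin m → k) Y)) with hφ
  have hinj : Function.Injective ((LinearMap.id : (Fin m → k) →ₗ[k] _).prodMap Y.subtype) := by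
    intro u v huv
    have := (Prod.ext_iff.1 huv)
    exact Prod.ext this.1 (Subtype.ext this.2)
  have h1 : Module.finrank k (gsub W Y f) = Module.finrank k (LinearMap.ker φ) := by
    rw [gsub]
    exact (Submodule.equivMapOfInjective _ hinj _).symm.finrank_eq
  have hsurj : Function.Surjective φ := by
    intro c
    obtain ⟨x, hx⟩ := Submodule.mkQ_surjective W c
    exact ⟨(x, 0), by simp [hφ, hx]⟩
  have h2 := LinearMap.finrank_range_add_finrank_ker φ
  rw [LinearMap.range_eq_top.2 hsurj] at h2
  have h3 : Module.finrank k ((Fin m → k) ⧸ W) + Module.finrank k W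
      = Module.finrank k (Fin m → k) := Submodule.finrank_quotient_add_finrank W
  have h4 : Module.finrank k ((Fin m → k) × Y)
      = Module.finrank k (Fin m → k) + Module.finrank k Y := Module.finrank_prod
  rw [finrank_top] at h2
  omega

end GrassStrat

namespace GrassStrat
variable {k : Type} [Field k] {m n : ℕ}
variable (V : Submodule k ((Fin m → k) × (Fin n → k)))

/-- Projection of `V` to its image in `k^n`. -/
noncomputable def sV : V →ₗ[k] (V.map (LinearMap.snd k (Fin m → k) (Fin n → k))) :=
  LinearMap.codRestrict _ ((LinearMap.snd k (Fin m → k) (Fin n → k)).comp V.subtype)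
    (fun v => Submodule.mem_map_of_mem v.2)

lemma sV_surj : Function.Surjective (sV V) := by
  rintro ⟨y, hy⟩
  obtain ⟨v, hv, hvy⟩ := hy
  exact ⟨⟨v, hv⟩, Subtype.ext hvy⟩

noncomputable def gV : V →ₗ[k] (Fin m → k) ⧸
    (V.comap (LinearMap.inl k (Fin m → k) (Fin n → k))) :=
  (Submodule.mkQ _).comp ((LinearMap.fst k (Fin m → k) (Fin n → k)).comp V.subtype)

lemma ker_le : LinearMap.ker (sV V) ≤ LinearMap.ker (gV V) := by
  rintro ⟨⟨x, y⟩, hv⟩ h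
  have hy : y = 0 := congrArg Subtype.val h
  subst hy
  simp only [LinearMap.mem_ker, gV, LinearMap.comp_apply, Submodule.subtype_apply,
    LinearMap.fst_apply, Submodule.mkQ_apply, Submodule.Quotient.mk_eq_zero]
  exact hv

/-- The induced map `proj(V) → k^m / (V ∩ (k^m × 0))`. -/
noncomputable def vf : (V.map (LinearMap.snd k (Fin m → k) (Fin n → k))) →ₗ[k]
    (Fin m → k) ⧸ (V.comap (LinearMap.inl k (Fin m → k) (Fin n → k))) :=
  (Submodule.liftQ _ (gV V) (ker_le V)).comp
    (((sV V).quotKerEquivOfSurjective (sV_surj V)).symm :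
      _ →ₗ[k] V ⧸ LinearMap.ker (sV V))

lemma vf_spec (x : Fin m → k) (y : Fin n → k) (hxy : (x, y) ∈ V)
    (hy : y ∈ V.map (LinearMap.snd k (Fin m → k) (Fin n → k))) :
    vf V ⟨y, hy⟩ = Submodule.Quotient.mk x := by
  have h1 : ((sV V).quotKerEquivOfSurjective (sV_surj V)).symm ⟨y, hy⟩
      = Submodule.Quotient.mk ⟨(x, y), hxy⟩ := by
    rw [LinearEquiv.symm_apply_eq]
    rfl
  simp only [vf, LinearMap.comp_apply, LinearEquiv.coe_coe, h1, Submodule.liftQ_apply]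
  rfl

end GrassStrat

namespace GrassStrat
variable {k : Type} [Field k] {m n : ℕ}
variable (V : Submodule k ((Fin m → k) × (Fin n → k)))

noncomputable def kerEquiv : LinearMap.ker (sV V) ≃ₗ[k]
    V.comap (LinearMap.inl k (Fin m → k) (Fin n → k)) where
  toFun v := ⟨v.1.1.1, by
    have h2 : (v.1.1.2 : Fin n → k) = 0 := congrArg Subtype.val v.2
    have : ((v.1.1.1, 0) : (Fin m → k) × (Fin n → k)) = v.1.1 := by
      rw [← h2]
    simpa [Submodule.mem_comap, this] using v.1.2⟩
  map_add' u v := rfl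
  map_smul' c v := rfl
  invFun x := ⟨⟨(x.1, 0), x.2⟩, Subtype.ext rfl⟩
  left_inv v := by
    apply Subtype.ext; apply Subtype.ext
    have h2 : (v.1.1.2 : Fin n → k) = 0 := congrArg Subtype.val v.2
    exact Prod.ext rfl h2.symm
  right_inv x := rfl

set_option synthInstance.maxHeartbeats 400000 in
lemma finrank_split :
    Module.finrank k (V.comap (LinearMap.inl k (Fin m → k) (Fin n → k)))
      + Module.finrank k (V.map (LinearMap.snd k (Fin m → k) (Fin n → k)))
    = Module.finrank k V := by
  have h := LinearMap.finrank_range_add_finrank_ker (sV V)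
  rw [LinearMap.range_eq_top.2 (sV_surj V), finrank_top] at h
  have hk : Module.finrank k (LinearMap.ker (sV V))
      = Module.finrank k (V.comap (LinearMap.inl k (Fin m → k) (Fin n → k))) :=
    (kerEquiv V).finrank_eq
  omega

lemma gsub_vf :
    gsub (V.comap (LinearMap.inl k (Fin m → k) (Fin n → k)))
      (V.map (LinearMap.snd k (Fin m → k) (Fin n → k))) (vf V) = V := by
  symm
  apply Submodule.eq_of_le_of_finrank_le
  · rintro ⟨x, y⟩ hxy
    exact mem_gsub.2 ⟨Submodule.mem_map_of_mem hxy, vf_spec V x y hxy _⟩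
  · rw [finrank_gsub, finrank_split]

end GrassStrat

/-- A triple `(W, Y, f)` with `W ⊆ k^{ba}` of dimension `a − p`, `Y ⊆ k^a` of dimension
`p`, and `f : Y → k^{ba}/W` linear. -/
structure GrassmannStratumTriple (k : Type) [Field k] (ba a p : ℕ) where
  W : Submodule k (Fin ba → k)
  Y : Submodule k (Fin a → k)
  f : Y →ₗ[k] (Fin ba → k) ⧸ W
  hW : Module.finrank k W = a - p
  hY : Module.finrank k Y = p

theorem grassmannian_stratum_equiv_triples (k : Type) [Field k] (a b p : ℕ)
    (hab : a ≤ b) (hpa : p ≤ a) (hfit : a - p ≤ b - a) :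
    ∃ e : {V : Submodule k ((Fin (b - a) → k) × (Fin a → k)) //
            Module.finrank k V = a ∧
              Module.finrank k (V.map (LinearMap.snd k (Fin (b - a) → k) (Fin a → k))) = p}
          ≃ GrassmannStratumTriple k (b - a) a p,
      ∀ V, (e V).W = Submodule.comap (LinearMap.inl k (Fin (b - a) → k) (Fin a → k)) (V : Submodule k _)
        ∧ (e V).Y = Submodule.map (LinearMap.snd k (Fin (b - a) → k) (Fin a → k)) (V : Submodule k _)
        ∧ ∀ (x : Fin (b - a) → k) (y : Fin a → k),
            (x, y) ∈ (V : Submodule k ((Fin (b - a) → k) × (Fin a → k))) →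
            ∀ hy : y ∈ (e V).Y, (e V).f ⟨y, hy⟩ = Submodule.Quotient.mk x := by
  classical
  set S := {V : Submodule k ((Fin (b - a) → k) × (Fin a → k)) //
            Module.finrank k V = a ∧
              Module.finrank k (V.map (LinearMap.snd k (Fin (b - a) → k) (Fin a → k))) = p}
    with hS
  let G : GrassmannStratumTriple k (b - a) a p → S := fun t =>
    ⟨GrassStrat.gsub t.W t.Y t.f,
      by rw [GrassStrat.finrank_gsub, t.hW, t.hY]; omega,
      by rw [GrassStrat.map_snd_gsub, t.hY]⟩
  have hinj : Function.Injective G := by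
    rintro ⟨W1, Y1, f1, hW1, hY1⟩ ⟨W2, Y2, f2, hW2, hY2⟩ h
    have hsub : GrassStrat.gsub W1 Y1 f1 = GrassStrat.gsub W2 Y2 f2 :=
      congrArg Subtype.val h
    have hW : W1 = W2 := by
      rw [← GrassStrat.comap_inl_gsub (f := f1), ← GrassStrat.comap_inl_gsub (f := f2), hsub]
    subst hW
    have hY : Y1 = Y2 := by
      rw [← GrassStrat.map_snd_gsub (f := f1), ← GrassStrat.map_snd_gsub (f := f2), hsub]
    subst hY
    have hf : f1 = f2 := by
      ext yy
      obtain ⟨y, hy⟩ := yy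
      obtain ⟨x, hx⟩ := Submodule.mkQ_surjective W1 (f1 ⟨y, hy⟩)
      have hmem : (x, y) ∈ GrassStrat.gsub W1 Y1 f1 :=
        GrassStrat.mem_gsub.2 ⟨hy, hx.symm⟩
      rw [hsub] at hmem
      obtain ⟨hy', hf2⟩ := GrassStrat.mem_gsub.1 hmem
      have hyy : (⟨y, hy⟩ : Y1) = ⟨y, hy'⟩ := rfl
      rw [hyy, hf2, ← hx]
      rfl
    subst hf
    rfl
  have hsurj : Function.Surjective G := by
    rintro ⟨V, hVa, hVp⟩
    have hsplit := GrassStrat.finrank_split V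
    refine ⟨⟨V.comap (LinearMap.inl k (Fin (b - a) → k) (Fin a → k)),
      V.map (LinearMap.snd k (Fin (b - a) → k) (Fin a → k)), GrassStrat.vf V,
      by omega, hVp⟩, ?_⟩
    exact Subtype.ext (GrassStrat.gsub_vf V)
  refine ⟨(Equiv.ofBijective G ⟨hinj, hsurj⟩).symm, fun V => ?_⟩
  have hGe : G ((Equiv.ofBijective G ⟨hinj, hsurj⟩).symm V) = V :=
    (Equiv.ofBijective G ⟨hinj, hsurj⟩).apply_symm_apply V
  set t := (Equiv.ofBijective G ⟨hinj, hsurj⟩).symm V with ht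
  have hval : GrassStrat.gsub t.W t.Y t.f = (V : Submodule k _) :=
    congrArg Subtype.val hGe
  refine ⟨by rw [← hval, GrassStrat.comap_inl_gsub],
    by rw [← hval, GrassStrat.map_snd_gsub], ?_⟩
  intro x y hxy hy
  have hmem : (x, y) ∈ GrassStrat.gsub t.W t.Y t.f := by rw [hval]; exact hxy
  obtain ⟨hy', hf⟩ := GrassStrat.mem_gsub.1 hmem
  have hyy : (⟨y, hy⟩ : t.Y) = ⟨y, hy'⟩ := rfl
  rw [hyy, hf]
end

section
/- Let F be a finite field with q elements, E a finite set, e₀ ∈ E, and (M_e)_{e ∈ E} a family of symmetric m×m matrices over F. Then the number of pairs (a, b) with a : E → F and b ∈ F satisfying det(b · M_{e₀} + Σ_{e ∈ E} a_e · M_e) = 0 equals q times the number of a : E → F satisfying det(Σ_{e ∈ E} a_e · M_e) = 0. (Point-counting form of Lemma 4.3(i): adding a duplicate edge makes X^∨_{Γ'} a cone over X^∨_Γ, since the new polynomial is obtained by the substitution A_{e₀} ↦ A_{e₀} + A_ε.) -/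
/-!
STATEMENT 15 (point-counting form of Lemma 4.3(i): adding a duplicate edge gives a cone):
For symmetric matrices `(M_e)_{e ∈ E}` over a finite field `F` with `q` elements, the
number of pairs `(a, b)` with `det (b·M_{e₀} + Σ_e a_e·M_e) = 0` equals `q` times the
number of `a` with `det (Σ_e a_e·M_e) = 0`.
-/

theorem card_cone_over_dual_hypersurface (F : Type) [Field F] [Fintype F]
    (E : Type) [Fintype E] (e₀ : E) (m : ℕ)
    (M : E → Matrix (Fin m) (Fin m) F) (hM : ∀ e, (M e).IsSymm) :
    Nat.card {ab : (E → F) × F //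
        (ab.2 • M e₀ + ∑ e : E, ab.1 e • M e).det = 0}
      = Fintype.card F *
        Nat.card {a : E → F // (∑ e : E, a e • M e).det = 0} := by
  classical
  have key : ∀ (a : E → F) (b : F),
      ∑ e : E, Function.update a e₀ (a e₀ + b) e • M e
        = b • M e₀ + ∑ e : E, a e • M e := by
    intro a b
    rw [← Finset.add_sum_erase _ (fun e => Function.update a e₀ (a e₀ + b) e • M e)
        (Finset.mem_univ e₀),
      ← Finset.add_sum_erase _ (fun e => a e • M e) (Finset.mem_univ e₀)]
    rw [Finset.sum_congr rfl (fun e he => by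
      rw [Function.update_of_ne (Finset.ne_of_mem_erase he)])]
    simp only [Function.update_self, add_smul]
    abel
  have equiv : {ab : (E → F) × F //
        (ab.2 • M e₀ + ∑ e : E, ab.1 e • M e).det = 0}
      ≃ F × {a : E → F // (∑ e : E, a e • M e).det = 0} :=
    { toFun := fun ab => (ab.1.2,
        ⟨Function.update ab.1.1 e₀ (ab.1.1 e₀ + ab.1.2), by
          rw [key]; exact ab.2⟩)
      invFun := fun p =>
        ⟨(Function.update p.2.1 e₀ (p.2.1 e₀ - p.1), p.1), by
          have := key (Function.update p.2.1 e₀ (p.2.1 e₀ - p.1)) p.1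
          simp only [Function.update_self, sub_add_cancel,
            Function.update_idem, Function.update_eq_self] at this
          simp only
          rw [← this]
          exact p.2.2⟩
      left_inv := fun ab => by
        ext <;> simp [Function.update_idem, Function.update_eq_self]
      right_inv := fun p => by
        ext <;> simp [Function.update_idem, Function.update_eq_self] }
  rw [Nat.card_congr equiv, Nat.card_prod, Nat.card_eq_fintype_card]
end
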